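/- For any rooted binary phylogenetic tree T on a taxon set X evolving under the symmetric 3-state model N_3 (not necessarily ultrametric), P_α(X) ≥ P_β(X), i.e. P(MP(f,T) = {α} | ρ = α) ≥ P(MP(f,T) = {β} | ρ = α). -/

import Mathlib

/-- A rooted binary phylogenetic tree: a `leaf` is a single taxon, and the
root of `node p₁ p₂ L R` has the roots of `L` and `R` as its two children,
attached by edges carrying one-specific-change probabilities `p₁` and `p₂`. -/
inductive PhyloTree : Type
  | leaf : PhyloTree
  | node (p₁ p₂ : ℝ) (L R : PhyloTree) : PhyloTree

namespace PhyloTree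

/-- The number of leaves (taxa) of the tree. -/
def nLeaves : PhyloTree → ℕ
  | leaf => 1
  | node _ _ L R => nLeaves L + nLeaves R

/-- All edge substitution probabilities of the tree lie in `[0, 1/3]`. -/
def valid : PhyloTree → Prop
  | leaf => True
  | node p₁ p₂ L R => 0 ≤ p₁ ∧ p₁ ≤ 1/3 ∧ 0 ≤ p₂ ∧ p₂ ≤ 1/3 ∧ valid L ∧ valid R

end PhyloTree

/-- Transition probabilities of the symmetric 3-state model `N₃`: conditional
on the upper endpoint of an edge with substitution probability `q` being in
state `a`, the lower endpoint is in each specific state `b ≠ a` with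
probability `q`, and in state `a` with probability `1 - 2q`. -/
noncomputable def trans3 (q : ℝ) (a b : Fin 3) : ℝ := if a = b then 1 - 2*q else q

/-- `charProb3 t a f` is the probability, conditional on the root of `t`
being in state `a`, that the leaves of `t` (read from left to right) are in
the states recorded by the list `f`.  States evolve independently along the
edges according to `trans3`. -/
noncomputable def charProb3 : PhyloTree → Fin 3 → List (Fin 3) → ℝ
  | .leaf, a, f => if f = [a] then 1 else 0
  | .node p₁ p₂ L R, a, f =>
      ∑ b : Fin 3, ∑ c : Fin 3, trans3 p₁ a b * trans3 p₂ a c *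
        charProb3 L b (f.take L.nLeaves) * charProb3 R c (f.drop L.nLeaves)

/-- Fitch's parsimony operation: `A ∩ B` if it is nonempty, `A ∪ B` otherwise. -/
def fitchOp {k : ℕ} (A B : Finset (Fin k)) : Finset (Fin k) :=
  if (A ∩ B).Nonempty then A ∩ B else A ∪ B

/-- The set `MP(f,T)` assigned to the root of `t` by the Fitch algorithm when
the leaves carry the character (list of leaf states) `f`. -/
def fitchSet3 : PhyloTree → List (Fin 3) → Finset (Fin 3)
  | .leaf, [b] => {b}
  | .leaf, _ => ∅
  | .node _ _ L R, f =>
      fitchOp (fitchSet3 L (f.take L.nLeaves)) (fitchSet3 R (f.drop L.nLeaves))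

/-- `rootProb3 t a R = P(MP(f,T) = R ∣ root state = a)`. -/
noncomputable def rootProb3 (t : PhyloTree) (a : Fin 3) (R : Finset (Fin 3)) : ℝ :=
  ∑ f : Fin t.nLeaves → Fin 3,
    if fitchSet3 t (List.ofFn f) = R then charProb3 t a (List.ofFn f) else 0

/-- The reconstruction accuracy
`RA(X) = ∑_{R ⊆ A, α ∈ R} (1/|R|) · P(MP(f,T) = R ∣ ρ = α)`, with `α := 0`. -/
noncomputable def RA3 (t : PhyloTree) : ℝ :=
  ∑ R : Finset (Fin 3),
    if (0 : Fin 3) ∈ R then (R.card : ℝ)⁻¹ * rootProb3 t 0 R else 0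

/-- `ultra3 t p`: the tree `t` is ultrametric, and the probability of one
specific state change from the root to any leaf is `p` (under `N₃`, the
one-specific-change probabilities compose along a path as
`p₁ ∘ q₁ = p₁ + q₁ - 3·p₁·q₁`). -/
def ultra3 : PhyloTree → ℝ → Prop
  | .leaf, p => p = 0
  | .node p₁ p₂ L R, p => ∃ q₁ q₂, ultra3 L q₁ ∧ ultra3 R q₂ ∧
      p = p₁ + q₁ - 3*p₁*q₁ ∧ p = p₂ + q₂ - 3*p₂*q₂

/-!
Say that a law `x` of Fitch sets, given root state `0`, *favours `0`* if it is nonnegative,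
symmetric in the states `1, 2`, and satisfies `x {1} ≤ x {0}` and `x {1, 2} ≤ x {0, 1}`.
A leaf favours `0`. An edge with substitution probability `p ≤ 1/3` scales both
differences `x {0} - x {1}` and `x {0, 1} - x {1, 2}` by `1 - 3p ≥ 0`, and the Fitch merge of
two laws favouring `0` favours `0`: every pair of child sets producing `{1}` (resp. `{1, 2}`)
is matched by a pair producing `{0}` (resp. `{0, 1}`) whose probability is at least as large.
-/

open Finset

theorem sum_ofFn_add {α M : Type*} [Fintype α] [AddCommMonoid M] (m n : ℕ) (G : List α → M) :
    ∑ f : Fin (m + n) → α, G (List.ofFn f) =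
      ∑ g : Fin m → α, ∑ h : Fin n → α, G (List.ofFn g ++ List.ofFn h) := by
  rw [← (Fin.appendEquiv m n).sum_comp, Fintype.sum_prod_type]
  simp [Fin.appendEquiv, List.ofFn_fin_append]

theorem sum_sum_mul_eq_sum_fiberwise {ι κ β γ R : Type*} [Fintype ι] [Fintype κ] [Fintype β]
    [Fintype γ] [DecidableEq β] [DecidableEq γ] [CommSemiring R]
    (k₁ : ι → β) (k₂ : κ → γ) (F : β → γ → R) (x : ι → R) (y : κ → R) :
    ∑ i, ∑ j, F (k₁ i) (k₂ j) * (x i * y j) =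
      ∑ U, ∑ V, F U V * ((∑ i with k₁ i = U, x i) * ∑ j with k₂ j = V, y j) := by
  symm
  calc _ = ∑ U, ∑ V, ∑ i with k₁ i = U, ∑ j with k₂ j = V, F (k₁ i) (k₂ j) * (x i * y j) := by
        simp only [sum_mul_sum]
        simp only [mul_sum]
        refine sum_congr rfl fun U _ => sum_congr rfl fun V _ =>
          sum_congr rfl fun i hi => sum_congr rfl fun j hj => ?_
        rw [(mem_filter.1 hi).2, (mem_filter.1 hj).2]
    _ = ∑ U, ∑ i with k₁ i = U, ∑ V, ∑ j with k₂ j = V, F (k₁ i) (k₂ j) * (x i * y j) :=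
        sum_congr rfl fun _ _ => sum_comm
    _ = _ := by simp only [sum_fiberwise]

theorem sum_univ_finset_fin_three {M : Type*} [AddCommMonoid M] (F : Finset (Fin 3) → M) :
    ∑ U, F U = F ∅ + F {0} + F {1} + F {2} + F {0, 1} + F {0, 2} + F {1, 2} + F {0, 1, 2} := by
  rw [show (univ : Finset (Finset (Fin 3))) =
      {∅, {0}, {1}, {2}, {0, 1}, {0, 2}, {1, 2}, {0, 1, 2}} by decide]
  repeat rw [sum_insert (by decide)]
  rw [sum_singleton]
  abel

theorem fitchOp_map {k : ℕ} (f : Fin k ↪ Fin k) (A B : Finset (Fin k)) :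
    fitchOp (A.map f) (B.map f) = (fitchOp A B).map f := by
  unfold fitchOp
  simp only [← map_inter, map_nonempty]
  split_ifs <;> simp [map_union]

theorem trans3_perm (σ : Equiv.Perm (Fin 3)) (q : ℝ) (a b : Fin 3) :
    trans3 q (σ a) (σ b) = trans3 q a b := by
  simp only [trans3, σ.injective.eq_iff]

theorem trans3_nonneg {q : ℝ} (hq₀ : 0 ≤ q) (hq : 2 * q ≤ 1) (a b : Fin 3) :
    0 ≤ trans3 q a b := by
  unfold trans3
  split_ifs <;> linarith

theorem charProb3_perm (σ : Equiv.Perm (Fin 3)) (t : PhyloTree) (a : Fin 3) (l : List (Fin 3)) :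
    charProb3 t (σ a) (l.map σ) = charProb3 t a l := by
  induction t generalizing a l with
  | leaf =>
    have : l.map σ = [σ a] ↔ l = [a] := by
      rw [← List.map_singleton, (List.map_injective_iff.2 σ.injective).eq_iff]
    simp only [charProb3, this]
  | node p₁ p₂ L R ihL ihR =>
    simp only [charProb3, ← List.map_take, ← List.map_drop]
    rw [← Equiv.sum_comp σ]
    refine sum_congr rfl fun b _ => ?_
    rw [← Equiv.sum_comp σ]
    simp only [trans3_perm, ihL, ihR]

theorem charProb3_nonneg {t : PhyloTree} (ht : t.valid) (a : Fin 3) (l : List (Fin 3)) :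
    0 ≤ charProb3 t a l := by
  induction t generalizing a l with
  | leaf =>
    unfold charProb3
    split_ifs <;> norm_num
  | node p₁ p₂ L R ihL ihR =>
    obtain ⟨hp₁, hp₁', hp₂, hp₂', hL, hR⟩ := ht
    have h₁ := trans3_nonneg hp₁ (by linarith) a
    have h₂ := trans3_nonneg hp₂ (by linarith) a
    exact sum_nonneg fun b _ => sum_nonneg fun c _ =>
      mul_nonneg (mul_nonneg (mul_nonneg (h₁ b) (h₂ c)) (ihL hL b _)) (ihR hR c _)

theorem fitchSet3_perm (σ : Equiv.Perm (Fin 3)) (t : PhyloTree) (l : List (Fin 3)) :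
    fitchSet3 t (l.map σ) = (fitchSet3 t l).map σ.toEmbedding := by
  induction t generalizing l with
  | leaf => rcases l with _ | ⟨b, _ | ⟨c, l⟩⟩ <;> simp [fitchSet3]
  | node p₁ p₂ L R ihL ihR =>
    rw [fitchSet3, fitchSet3, ← List.map_take, ← List.map_drop, ihL, ihR, fitchOp_map]

theorem rootProb3_perm (σ : Equiv.Perm (Fin 3)) (t : PhyloTree) (a : Fin 3)
    (S : Finset (Fin 3)) : rootProb3 t (σ a) (S.map σ.toEmbedding) = rootProb3 t a S := by
  rw [rootProb3, rootProb3, ← (Equiv.piCongrRight fun _ => σ).sum_comp]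
  refine sum_congr rfl fun f _ => ?_
  have hf : List.ofFn (Equiv.piCongrRight (fun _ => σ) f) = (List.ofFn f).map σ := by
    rw [List.map_ofFn]
    rfl
  simp only [hf, fitchSet3_perm, charProb3_perm, map_inj]

theorem rootProb3_eq_of_perm (σ : Equiv.Perm (Fin 3)) (t : PhyloTree) {a b : Fin 3}
    {S T : Finset (Fin 3)} (hab : σ a = b) (hST : S.map σ.toEmbedding = T) :
    rootProb3 t b T = rootProb3 t a S := by
  rw [← hab, ← hST, rootProb3_perm]

theorem rootProb3_nonneg {t : PhyloTree} (ht : t.valid) (a : Fin 3) (S : Finset (Fin 3)) :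
    0 ≤ rootProb3 t a S :=
  sum_nonneg fun f _ => by
    split_ifs
    exacts [charProb3_nonneg ht a _, le_rfl]

theorem rootProb3_leaf (a : Fin 3) (S : Finset (Fin 3)) :
    rootProb3 .leaf a S = if {a} = S then 1 else 0 := by
  have hofn (b : Fin 3) :
      List.ofFn (n := PhyloTree.leaf.nLeaves) ((Equiv.funUnique (Fin 1) (Fin 3)).symm b) = [b] :=
    rfl
  change ∑ f : Fin 1 → Fin 3, _ = _
  rw [← Equiv.sum_comp (Equiv.funUnique (Fin 1) (Fin 3)).symm]
  simp only [hofn, fitchSet3, charProb3, List.cons.injEq, and_true]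
  rw [Fintype.sum_eq_single a fun b hb => by simp [hb]]
  simp

/-- The law of the Fitch set of `t` seen from the upper end of an edge with substitution
probability `p` whose upper end is in state `a`. -/
noncomputable def edgeProb3 (p : ℝ) (t : PhyloTree) (a : Fin 3) (U : Finset (Fin 3)) : ℝ :=
  ∑ b, trans3 p a b * rootProb3 t b U

/-- The law of `fitchOp U V` for independent `U ∼ x` and `V ∼ y`. -/
noncomputable def fitchConv {k : ℕ} (x y : Finset (Fin k) → ℝ) (S : Finset (Fin k)) : ℝ :=
  ∑ U, ∑ V, if fitchOp U V = S then x U * y V else 0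

theorem edgeProb3_eq_sum_filter (p : ℝ) (t : PhyloTree) (a : Fin 3) (U : Finset (Fin 3)) :
    edgeProb3 p t a U = ∑ f : Fin t.nLeaves → Fin 3 with fitchSet3 t (List.ofFn f) = U,
      ∑ b, trans3 p a b * charProb3 t b (List.ofFn f) := by
  simp only [edgeProb3, rootProb3, ← sum_filter, mul_sum]
  exact sum_comm

theorem rootProb3_node (p₁ p₂ : ℝ) (L R : PhyloTree) (a : Fin 3) :
    rootProb3 (.node p₁ p₂ L R) a = fitchConv (edgeProb3 p₁ L a) (edgeProb3 p₂ R a) := by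
  funext S
  have hfiber := sum_sum_mul_eq_sum_fiberwise
    (fun g : Fin L.nLeaves → Fin 3 => fitchSet3 L (List.ofFn g))
    (fun h : Fin R.nLeaves → Fin 3 => fitchSet3 R (List.ofFn h))
    (fun U V => if fitchOp U V = S then (1 : ℝ) else 0)
    (fun g => ∑ b, trans3 p₁ a b * charProb3 L b (List.ofFn g))
    (fun h => ∑ c, trans3 p₂ a c * charProb3 R c (List.ofFn h))
  simp only [ite_mul, one_mul, zero_mul, ← edgeProb3_eq_sum_filter] at hfiber
  rw [fitchConv, ← hfiber]
  refine (sum_ofFn_add L.nLeaves R.nLeaves fun l =>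
    if fitchSet3 (.node p₁ p₂ L R) l = S then charProb3 (.node p₁ p₂ L R) a l else 0).trans ?_
  refine sum_congr rfl fun g _ => sum_congr rfl fun h _ => ?_
  have htake : (List.ofFn g ++ List.ofFn h).take L.nLeaves = List.ofFn g :=
    List.take_left' List.length_ofFn
  have hdrop : (List.ofFn g ++ List.ofFn h).drop L.nLeaves = List.ofFn h :=
    List.drop_left' List.length_ofFn
  simp only [fitchSet3, charProb3, htake, hdrop, sum_mul_sum]
  congr 1
  exact sum_congr rfl fun b _ => sum_congr rfl fun c _ => by ring

theorem fitchConv_nonneg {k : ℕ} {x y : Finset (Fin k) → ℝ} (hx : ∀ U, 0 ≤ x U)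
    (hy : ∀ V, 0 ≤ y V) (S : Finset (Fin k)) : 0 ≤ fitchConv x y S :=
  sum_nonneg fun U _ => sum_nonneg fun V _ => by
    split_ifs
    exacts [mul_nonneg (hx U) (hy V), le_rfl]

theorem fitchConv_map {k : ℕ} (σ : Equiv.Perm (Fin k)) {x y : Finset (Fin k) → ℝ}
    (hx : ∀ U, x (U.map σ.toEmbedding) = x U) (hy : ∀ V, y (V.map σ.toEmbedding) = y V)
    (S : Finset (Fin k)) : fitchConv x y (S.map σ.toEmbedding) = fitchConv x y S := by
  rw [fitchConv, ← Equiv.sum_comp (Equiv.finsetCongr σ)]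
  refine sum_congr rfl fun U _ => ?_
  rw [← Equiv.sum_comp (Equiv.finsetCongr σ)]
  simp only [Equiv.finsetCongr_apply, fitchOp_map, map_inj, hx, hy]

def FavoursZero (x : Finset (Fin 3) → ℝ) : Prop :=
  (∀ S, 0 ≤ x S) ∧ (∀ S, x (S.map (Equiv.swap 1 2).toEmbedding) = x S) ∧
    x {1} ≤ x {0} ∧ x {1, 2} ≤ x {0, 1}

theorem FavoursZero.fitchConv {x y : Finset (Fin 3) → ℝ} (hx : FavoursZero x)
    (hy : FavoursZero y) : FavoursZero (fitchConv x y) := by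
  obtain ⟨hx0, hxσ, hx1, hx2⟩ := hx
  obtain ⟨hy0, hyσ, hy1, hy2⟩ := hy
  have hx₂ : x {2} = x {1} := (congrArg x (by decide)).trans (hxσ {1})
  have hy₂ : y {2} = y {1} := (congrArg y (by decide)).trans (hyσ {1})
  have hx₀₂ : x {0, 2} = x {0, 1} := (congrArg x (by decide)).trans (hxσ {0, 1})
  have hy₀₂ : y {0, 2} = y {0, 1} := (congrArg y (by decide)).trans (hyσ {0, 1})
  have dx₁ : 0 ≤ x {0} - x {1} := sub_nonneg.2 hx1
  have dx₂ : 0 ≤ x {0, 1} - x {1, 2} := sub_nonneg.2 hx2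
  have dy₁ : 0 ≤ y {0} - y {1} := sub_nonneg.2 hy1
  have dy₂ : 0 ≤ y {0, 1} - y {1, 2} := sub_nonneg.2 hy2
  refine ⟨fitchConv_nonneg hx0 hy0, fitchConv_map _ hxσ hyσ, ?_, ?_⟩
  all_goals
    simp only [_root_.fitchConv, sum_univ_finset_fin_three]
    simp +decide only [if_true, if_false]
    simp only [hx₂, hy₂, hx₀₂, hy₀₂]
  · linarith [mul_nonneg (hx0 ∅) dy₁, mul_nonneg dx₁ (hy0 ∅), mul_nonneg dx₁ (hy0 {0}),
      mul_nonneg (hx0 {1}) dy₁, mul_nonneg dx₁ (hy0 {0, 1}), mul_nonneg dx₁ (hy0 {0, 1, 2}),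
      mul_nonneg (hx0 {1}) dy₂, mul_nonneg (hx0 {0, 1}) dy₁, mul_nonneg dx₂ (hy0 {1}),
      mul_nonneg (hx0 {0, 1, 2}) dy₁, mul_nonneg (hx0 {0, 1}) dy₂, mul_nonneg dx₂ (hy0 {0, 1})]
  · linarith [mul_nonneg (hx0 ∅) dy₂, mul_nonneg dx₂ (hy0 ∅), mul_nonneg dx₁ (hy0 {1}),
      mul_nonneg (hx0 {1}) dy₁, mul_nonneg dx₂ (hy0 {0, 1}), mul_nonneg (hx0 {1, 2}) dy₂,
      mul_nonneg dx₂ (hy0 {0, 1, 2}), mul_nonneg (hx0 {0, 1, 2}) dy₂]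

theorem edgeProb3_perm (σ : Equiv.Perm (Fin 3)) (p : ℝ) (t : PhyloTree) (a : Fin 3)
    (S : Finset (Fin 3)) : edgeProb3 p t (σ a) (S.map σ.toEmbedding) = edgeProb3 p t a S := by
  rw [edgeProb3, edgeProb3, ← Equiv.sum_comp σ]
  simp only [trans3_perm, rootProb3_perm]

theorem edgeProb3_singleton_sub (p : ℝ) (t : PhyloTree) :
    edgeProb3 p t 0 {0} - edgeProb3 p t 0 {1} =
      (1 - 3 * p) * (rootProb3 t 0 {0} - rootProb3 t 0 {1}) := by
  have h₁₀ : rootProb3 t 1 {0} = rootProb3 t 0 {1} :=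
    rootProb3_eq_of_perm (Equiv.swap 0 1) t (by decide) (by decide)
  have h₂₀ : rootProb3 t 2 {0} = rootProb3 t 0 {1} :=
    rootProb3_eq_of_perm (Equiv.swap 0 2 * Equiv.swap 1 2) t (by decide) (by decide)
  have h₁₁ : rootProb3 t 1 {1} = rootProb3 t 0 {0} :=
    rootProb3_eq_of_perm (Equiv.swap 0 1) t (by decide) (by decide)
  have h₂₁ : rootProb3 t 2 {1} = rootProb3 t 0 {1} :=
    rootProb3_eq_of_perm (Equiv.swap 0 2) t (by decide) (by decide)
  simp only [edgeProb3, Fin.sum_univ_three, trans3]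
  simp +decide only [if_true, if_false]
  rw [h₁₀, h₂₀, h₁₁, h₂₁]
  ring

theorem edgeProb3_pair_sub (p : ℝ) (t : PhyloTree) :
    edgeProb3 p t 0 {0, 1} - edgeProb3 p t 0 {1, 2} =
      (1 - 3 * p) * (rootProb3 t 0 {0, 1} - rootProb3 t 0 {1, 2}) := by
  have h₁₀₁ : rootProb3 t 1 {0, 1} = rootProb3 t 0 {0, 1} :=
    rootProb3_eq_of_perm (Equiv.swap 0 1) t (by decide) (by decide)
  have h₂₀₁ : rootProb3 t 2 {0, 1} = rootProb3 t 0 {1, 2} :=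
    rootProb3_eq_of_perm (Equiv.swap 0 2) t (by decide) (by decide)
  have h₁₁₂ : rootProb3 t 1 {1, 2} = rootProb3 t 0 {0, 1} :=
    rootProb3_eq_of_perm (finRotate 3) t (by decide) (by decide)
  have h₂₁₂ : rootProb3 t 2 {1, 2} = rootProb3 t 0 {0, 1} :=
    rootProb3_eq_of_perm (Equiv.swap 0 2) t (by decide) (by decide)
  simp only [edgeProb3, Fin.sum_univ_three, trans3]
  simp +decide only [if_true, if_false]
  rw [h₁₀₁, h₂₀₁, h₁₁₂, h₂₁₂]
  ring

theorem FavoursZero.edgeProb3 {t : PhyloTree} (ht : t.valid) {p : ℝ} (hp₀ : 0 ≤ p)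
    (hp : p ≤ 1 / 3) (h : FavoursZero (rootProb3 t 0)) : FavoursZero (edgeProb3 p t 0) := by
  obtain ⟨-, -, h₁, h₂⟩ := h
  have hscale : 0 ≤ 1 - 3 * p := by linarith
  refine ⟨fun S => sum_nonneg fun b _ =>
      mul_nonneg (trans3_nonneg hp₀ (by linarith) 0 b) (rootProb3_nonneg ht b S),
    fun S => edgeProb3_perm (Equiv.swap 1 2) p t 0 S, ?_, ?_⟩
  · linarith [edgeProb3_singleton_sub p t, mul_nonneg hscale (sub_nonneg.2 h₁)]
  · linarith [edgeProb3_pair_sub p t, mul_nonneg hscale (sub_nonneg.2 h₂)]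

theorem favoursZero_rootProb3 {t : PhyloTree} (ht : t.valid) : FavoursZero (rootProb3 t 0) := by
  induction t with
  | leaf =>
    refine ⟨rootProb3_nonneg ht 0, fun S => rootProb3_perm (Equiv.swap 1 2) _ 0 S, ?_, ?_⟩ <;>
      simp +decide [rootProb3_leaf]
  | node p₁ p₂ L R ihL ihR =>
    obtain ⟨hp₁, hp₁', hp₂, hp₂', hL, hR⟩ := ht
    rw [rootProb3_node]
    exact ((ihL hL).edgeProb3 hL hp₁ hp₁').fitchConv ((ihR hR).edgeProb3 hR hp₂ hp₂')

theorem rootProb3_alpha_ge_beta_general (t : PhyloTree)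
    (hv : t.valid) :
    rootProb3 t 0 {0} ≥ rootProb3 t 0 {1} :=
  (favoursZero_rootProb3 hv).2.2.1

/-- For any rooted binary phylogenetic tree under `N₃` (not
necessarily ultrametric), `P_α(X) ≥ P_β(X)`. -/
theorem rootProb3_alpha_ge_beta (t : PhyloTree) (hn : 2 ≤ t.nLeaves)
    (hv : t.valid) :
    rootProb3 t 0 {0} ≥ rootProb3 t 0 {1} :=
  rootProb3_alpha_ge_beta_general t hv
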